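/- Let n ≥ 1 and let p be a homogeneous element of degree n+1 of T (so p has zero constant term), with decomposition p = x·p_x + y·p_y. Then [x, γ(p_x)] + [y, γ(p_y)] = ((n+1)/n) · γ(p). -/

import Mathlib

noncomputable section

open scoped BigOperators

variable (K : Type) [Field K] [CharZero K]

/-- The free associative algebra `T = K⟨x,y⟩`, realized as the monoid algebra of the
free monoid on two generators. -/
abbrev T := MonoidAlgebra K (FreeMonoid (Fin 2))

/-- The word `v₁⋯vₙ` (a list of letters) as an element of `T`. -/
def word (l : List (Fin 2)) : T K := MonoidAlgebra.single (FreeMonoid.ofList l) 1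

/-- The generator `x`. -/
def X : T K := word K [0]

/-- The generator `y`. -/
def Y : T K := word K [1]

/-- Right-nested bracket `[v₁,[v₂,…,[vₙ₋₁,vₙ]…]]` of a word. -/
def brList : List (Fin 2) → T K
  | [] => 0
  | [v] => word K [v]
  | v :: rest => word K [v] * brList rest - brList rest * word K [v]

/-- The Dynkin map `γ : T → T`, sending a word `v₁⋯vₙ` to
`(1/n)[v₁,[v₂,…,[vₙ₋₁,vₙ]…]]` (and `1 ↦ 0`). -/
def dynkin : T K →ₗ[K] T K :=
  Finsupp.linearCombination K (fun w : FreeMonoid (Fin 2) =>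
    ((w.toList.length : K)⁻¹) • brList K w.toList) ∘ₗ
  (MonoidAlgebra.coeffLinearEquiv K).toLinearMap

section
attribute [local instance] LieRing.ofAssociativeRing
/-- The free Lie algebra `L` on `x, y`, as the Lie subalgebra of `T` generated by `x` and `y`. -/
def L : LieSubalgebra K (T K) := LieSubalgebra.lieSpan K (T K) {X K, Y K}
end

/-- The degree-`n` homogeneous component `T_n` of `T`, spanned by the words of length `n`. -/
def homog (n : ℕ) : Submodule K (T K) :=
  Submodule.span K { t | ∃ l : List (Fin 2), l.length = n ∧ t = word K l }

/-- The value `σ(i)` of a permutation of `{0,…,n-1}` on a natural number (junk value `0`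
outside the range). -/
def permVal {n : ℕ} (σ : Equiv.Perm (Fin n)) (i : ℕ) : ℕ :=
  if h : i < n then (σ ⟨i, h⟩ : ℕ) else 0

/-- The (0-indexed) descent set of a permutation: positions `i ∈ {0,…,n-2}` with
`σ(i) > σ(i+1)`. -/
def descSet {n : ℕ} (σ : Equiv.Perm (Fin n)) : Finset ℕ :=
  (Finset.range (n - 1)).filter fun i => permVal σ (i + 1) < permVal σ i

/-- The number of descents of a permutation. -/
def descNum {n : ℕ} (σ : Equiv.Perm (Fin n)) : ℕ := (descSet σ).card

/-- `DSet n k` is the set of permutations of `{0,…,n-1}` whose descent set is exactly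
the first `k` positions (this is `D_{1..k}` of the paper, in 0-indexed form). -/
def DSet (n k : ℕ) : Finset (Equiv.Perm (Fin n)) :=
  Finset.univ.filter fun σ => descSet σ = Finset.range k

/-- The Eulerian coefficient `c_σ = (-1)^{d(σ)} (binom (n-1) (d σ))⁻¹`. -/
def eulCoeff {n : ℕ} (σ : Equiv.Perm (Fin n)) : K :=
  (-1 : K) ^ descNum σ * ((Nat.choose (n - 1) (descNum σ) : K))⁻¹

/-- The degree-`n` Eulerian idempotent applied to the word `w₁⋯wₙ` given by
`v : Fin n → Fin 2`: `eₙ(w) = Σ_σ c_σ w^σ`. -/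
def eul (n : ℕ) (v : Fin n → Fin 2) : T K :=
  ∑ σ : Equiv.Perm (Fin n), eulCoeff K σ • word K (List.ofFn fun i => v (σ i))

/-- The `a`-part of an element of `T`: the linear map sending a word `a·w ↦ w` and
any word not starting with the letter `a` (or the empty word) to `0`.  For `p` with zero
constant term, `p = x·(letterPart 0 p) + y·(letterPart 1 p)`. -/
def letterPart (a : Fin 2) : T K →ₗ[K] T K :=
  Finsupp.linearCombination K (fun w : FreeMonoid (Fin 2) =>
    match w.toList with
    | [] => 0
    | b :: rest => if b = a then word K rest else 0)
  ∘ₗ (MonoidAlgebra.coeffLinearEquiv K).toLinearMap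

/-- The algebra endomorphism `s : T → T` with `s(x) = -y`, `s(y) = -x`. -/
def sMap : T K →ₐ[K] T K :=
  MonoidAlgebra.lift K (T K) (FreeMonoid (Fin 2))
    (FreeMonoid.lift fun a : Fin 2 => if a = 0 then -(Y K) else -(X K))

/-! On a word `v₁v₂⋯vₙ₊₁` exactly one of the two letter parts is nonzero, and
`[v₁, γ(v₂⋯vₙ₊₁)] = (1/n)[v₁,[v₂,…,vₙ₊₁]] = ((n+1)/n) γ(v₁⋯vₙ₊₁)` since `n ≥ 1`.
Both sides of the identity are linear in `p`, so it extends from words to all of `T_{n+1}`. -/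

section

variable {K : Type} [Field K]

lemma dynkin_word (l : List (Fin 2)) :
    dynkin K (word K l) = (l.length : K)⁻¹ • brList K l := by
  simp [dynkin, word]

lemma letterPart_word_cons (a b : Fin 2) (l : List (Fin 2)) :
    letterPart K a (word K (b :: l)) = if b = a then word K l else 0 := by
  simp [letterPart, word]

lemma brList_cons_of_ne_nil (c : Fin 2) {l : List (Fin 2)} (hl : l ≠ []) :
    brList K (c :: l) = ⁅word K [c], brList K l⁆ := by
  obtain ⟨b, l, rfl⟩ := List.exists_cons_of_ne_nil hl
  rw [Ring.lie_def]; rfl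

attribute [local instance] LieRing.ofAssociativeRing

lemma lie_word_dynkin_word [CharZero K] (c : Fin 2) {l : List (Fin 2)} (hl : l ≠ []) :
    ⁅word K [c], dynkin K (word K l)⁆ =
      (((l.length : K) + 1) / l.length) • dynkin K (word K (c :: l)) := by
  have hlen : (l.length : K) ≠ 0 := by simpa using hl
  rw [dynkin_word, dynkin_word, brList_cons_of_ne_nil c hl, lie_smul, smul_smul,
    List.length_cons, Nat.cast_succ]
  congr 1
  field_simp

variable (K) in
def bracketLetterParts : T K →ₗ[K] T K :=
  LieAlgebra.ad K (T K) (X K) ∘ₗ dynkin K ∘ₗ letterPart K 0 +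
    LieAlgebra.ad K (T K) (Y K) ∘ₗ dynkin K ∘ₗ letterPart K 1

lemma bracketLetterParts_apply (p : T K) :
    bracketLetterParts K p =
      ⁅X K, dynkin K (letterPart K 0 p)⁆ + ⁅Y K, dynkin K (letterPart K 1 p)⁆ :=
  rfl

lemma bracketLetterParts_word_cons (c : Fin 2) (l : List (Fin 2)) :
    bracketLetterParts K (word K (c :: l)) = ⁅word K [c], dynkin K (word K l)⁆ := by
  fin_cases c <;> simp [bracketLetterParts_apply, letterPart_word_cons, X, Y]

end

/-- For `p` homogeneous of degree `n + 1` (with `n ≥ 1`), with decomposition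
`p = x·p_x + y·p_y`, one has `[x, γ(p_x)] + [y, γ(p_y)] = ((n+1)/n) • γ(p)`. -/
theorem stmt11 (n : ℕ) (hn : 1 ≤ n) (p : T K) (hp : p ∈ homog K (n + 1)) :
    ⁅X K, dynkin K (letterPart K 0 p)⁆ + ⁅Y K, dynkin K (letterPart K 1 p)⁆ =
      (((n : K) + 1) / (n : K)) • dynkin K p := by
  rw [← bracketLetterParts_apply]
  have hwords : Set.EqOn (bracketLetterParts K) ⇑((((n : K) + 1) / n) • dynkin K)
      {t | ∃ l : List (Fin 2), l.length = n + 1 ∧ t = word K l} := by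
    rintro _ ⟨_ | ⟨c, l⟩, hl, rfl⟩
    · simp at hl
    have hl' : l.length = n := by simpa using hl
    have hne : l ≠ [] := List.ne_nil_of_length_pos (by omega)
    rw [bracketLetterParts_word_cons, lie_word_dynkin_word c hne, hl', LinearMap.smul_apply]
  exact LinearMap.eqOn_span' hwords hp

end
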